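/- arXiv:2311.17884 — 7 statements merged into one kernel-verified Lean document; each statement's English description precedes it below -/
import Mathlib

section
/- Let m ≥ 2, let s_1,…,s_m be nonnegative integers with total t = s_1+⋯+s_m, and let l_j, u_j be integers with 0 ≤ l_j ≤ u_j ≤ s_j and l_j + u_j = s_j for each j (symmetric core constraints). For a nonnegative integer n let N(n) = ∑ ∏_{j=1}^m C(s_j, x_j), the sum over all x ∈ ℕ^m with x_1+⋯+x_m = n and l_j ≤ x_j ≤ u_j for all j. Then for any two sample sizes n, n' with 2n ≥ t and n < n' ≤ t, one has N(n)·C(t, n') ≥ N(n')·C(t, n); equivalently, the multiple hypergeometric symmetric core probability P_n[X ∈ B] = N(n)/C(t,n) satisfies P_n[X ∈ B] ≥ P_{n'}[X ∈ B]. -/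
/-!
With `g_j = ∑_{l_j ≤ v ≤ u_j} C(s_j, v) X^v`, `N(r)` is the coefficient of `X^r` in `P = ∏ g_j`,
and the claim follows by chaining the one-step inequality `(n+1) N(n+1) ≤ (t-n) N(n)`, `t ≤ 2n`.
Its defect is the `n`-th coefficient of `t P - (X+1) P' = ∑_j (s_j g_j - (X+1) g_j') M_j`, where
`M_j = ∏_{i ≠ j} g_i`. Each bracket telescopes to `l_j C(s_j, l_j) (X^{u_j} - X^{l_j-1})`, so the
defect is a nonnegative combination of differences `[X^{n-u_j}] M_j - [X^{n+1-l_j}] M_j`.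
Each `g_j` has coefficients symmetric about `s_j/2` and unimodal, a property preserved by products
(Wintner), so `M_j` is symmetric unimodal about `(t - s_j)/2`; as `t ≤ 2n + 1`, the index `n - u_j`
is at least as close to that centre as `n + 1 - l_j`, and each difference is nonnegative.
-/

open Polynomial Finset

lemma Nat.choose_le_choose_succ_of_two_mul_lt {n k : ℕ} (h : 2 * k < n) :
    n.choose k ≤ n.choose (k + 1) :=
  Nat.le_of_mul_le_mul_right (c := k + 1)
    (calc n.choose k * (k + 1) ≤ n.choose k * (n - k) := Nat.mul_le_mul_left _ (by omega)
      _ = n.choose (k + 1) * (k + 1) := (Nat.choose_succ_right_eq n k).symm)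
    k.succ_pos

lemma Nat.succ_mul_choose_succ_add_mul_choose (n k : ℕ) :
    (k + 1) * n.choose (k + 1) + k * n.choose k = n * n.choose k := by
  rcases le_or_gt k n with h | h
  · rw [mul_comm, Nat.choose_succ_right_eq, mul_comm k, ← Nat.mul_add, Nat.sub_add_cancel h,
      mul_comm]
  · simp [Nat.choose_eq_zero_of_lt h, Nat.choose_eq_zero_of_lt (by omega : n < k + 1)]

lemma Nat.succ_mul_choose_succ_of_add_eq {n k l : ℕ} (h : l + k = n) :
    (k + 1) * n.choose (k + 1) = l * n.choose l := by
  subst h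
  rw [mul_comm, Nat.choose_succ_right_eq, Nat.add_sub_cancel, ← Nat.choose_symm_add, mul_comm]

namespace Polynomial

lemma coeff_geomSum_X {R : Type*} [Semiring R] (e k : ℕ) :
    (∑ i ∈ range (e + 1), X ^ i : R[X]).coeff k = if k ≤ e then 1 else 0 := by
  simp only [finsetSum_coeff, coeff_X_pow, sum_ite_eq, mem_range]
  congr 1; simp only [eq_iff_iff]; omega

lemma natDegree_geomSum_X_le {R : Type*} [Semiring R] (e : ℕ) :
    (∑ i ∈ range (e + 1), X ^ i : R[X]).natDegree ≤ e :=
  natDegree_sum_le_of_forall_le _ _ fun i hi => (natDegree_X_pow_le i).trans (by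
    simp only [mem_range] at hi; omega)

lemma coeff_X_mul_derivative {R : Type*} [Semiring R] (p : R[X]) (k : ℕ) :
    (X * derivative p).coeff k = k * p.coeff k := by
  rcases k with _ | k
  · simp
  · rw [coeff_X_mul, coeff_derivative, Nat.cast_comm]; push_cast; rfl

lemma coeff_C_mul_sub_X_add_one_mul_derivative {R : Type*} [CommRing R] (c : R) (p : R[X])
    (n : ℕ) : (C c * p - (X + 1) * derivative p).coeff n
      = (c - n) * p.coeff n - (n + 1) * p.coeff (n + 1) := by
  rw [coeff_sub, add_mul, coeff_add, coeff_X_mul_derivative, one_mul, coeff_derivative,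
    coeff_C_mul]
  ring

lemma C_sum_mul_prod_sub_mul_derivative_prod {R ι : Type*} [CommRing R] [DecidableEq ι]
    (T : Finset ι) (w : ι → R) (f : ι → R[X]) (q : R[X]) :
    C (∑ j ∈ T, w j) * ∏ i ∈ T, f i - q * derivative (∏ i ∈ T, f i)
      = ∑ j ∈ T, (C (w j) * f j - q * derivative (f j)) * ∏ i ∈ T.erase j, f i := by
  simp only [derivative_prod_finset, map_sum, sum_mul, mul_sum, ← sum_sub_distrib, sub_mul]
  refine sum_congr rfl fun j hj => ?_
  rw [mul_assoc, mul_prod_erase T f hj]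
  ring

lemma coeff_prod_sum_C_mul_X_pow {ι R : Type*} [Fintype ι] [DecidableEq ι] [CommSemiring R]
    (A : ι → Finset ℕ) (f : ι → ℕ → R) (r : ℕ) :
    (∏ i, ∑ v ∈ A i, C (f i v) * X ^ v).coeff r
      = ∑ x ∈ (Fintype.piFinset A).filter (fun x => ∑ i, x i = r), ∏ i, f i (x i) := by
  rw [prod_univ_sum, finsetSum_coeff, sum_filter]
  refine sum_congr rfl fun x _ => ?_
  rw [prod_mul_distrib, ← map_prod, prod_pow_eq_pow_sum, coeff_C_mul_X_pow]
  simp only [eq_comm]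

/-- A symmetric unimodal coefficient sequence is a stack of centred boxes; this removes the
bottom box `q₀ (1 + X + ⋯ + X ^ e)` and shifts the rest down by one. -/
noncomputable def peelLayer {R : Type*} [Ring R] (e : ℕ) (q : R[X]) : R[X] :=
  divX (q - C (q.coeff 0) * ∑ i ∈ range (e + 1), X ^ i)

section peelLayer

variable {R : Type*} [Ring R] (e : ℕ) (q : R[X])

lemma eq_C_mul_geomSum_add_X_mul_peelLayer :
    q = C (q.coeff 0) * ∑ i ∈ range (e + 1), X ^ i + X * peelLayer e q := by
  have h := divX_mul_X_add (q - C (q.coeff 0) * ∑ i ∈ range (e + 1), X ^ i)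
  rw [coeff_sub, coeff_C_mul, coeff_geomSum_X, if_pos (Nat.zero_le e), mul_one, sub_self,
    C_0, add_zero] at h
  rw [peelLayer, (commute_X _).eq, h, add_sub_cancel]

lemma coeff_peelLayer (k : ℕ) :
    (peelLayer e q).coeff k = q.coeff (k + 1) - q.coeff 0 * if k + 1 ≤ e then 1 else 0 := by
  rw [peelLayer, coeff_divX, coeff_sub, coeff_C_mul, coeff_geomSum_X]

end peelLayer

section SymmUnimodal

variable {R : Type*} [CommRing R] [PartialOrder R]

structure IsSymmUnimodal (d : ℕ) (p : R[X]) : Prop where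
  coeff_nonneg : ∀ k, 0 ≤ p.coeff k
  natDegree_le : p.natDegree ≤ d
  reflect_eq : p.reflect d = p
  coeff_le_coeff_succ : ∀ k, 2 * k < d → p.coeff k ≤ p.coeff (k + 1)

namespace IsSymmUnimodal

variable {d e : ℕ} {p q : R[X]}

lemma coeff_eq_zero (hp : IsSymmUnimodal d p) {k : ℕ} (hk : d < k) : p.coeff k = 0 :=
  coeff_eq_zero_of_natDegree_lt (hp.natDegree_le.trans_lt hk)

lemma coeff_symm (hp : IsSymmUnimodal d p) {k : ℕ} (hk : k ≤ d) :
    p.coeff (d - k) = p.coeff k := by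
  conv_rhs => rw [← hp.reflect_eq, coeff_reflect, revAt_le hk]

lemma coeff_le_coeff (hp : IsSymmUnimodal d p) {i j : ℕ} (hij : i ≤ j) (h : i + j ≤ d) :
    p.coeff i ≤ p.coeff j := by
  have up : ∀ j, i ≤ j → 2 * j ≤ d → p.coeff i ≤ p.coeff j := by
    intro j hij hj
    induction j, hij using Nat.le_induction with
    | base => rfl
    | succ j _ ih => exact (ih (by omega)).trans (hp.coeff_le_coeff_succ j (by omega))
  rcases le_or_gt (2 * j) d with hj | hj
  · exact up j hij hj
  · rw [← hp.coeff_symm (by omega : j ≤ d)]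
    exact up _ (by omega) (by omega)

lemma coeff_le_coeff_of_le_add (hp : IsSymmUnimodal d p) {i j : ℕ} (hij : i ≤ j)
    (h : d ≤ i + j) : p.coeff j ≤ p.coeff i := by
  rcases le_or_gt j d with hj | hj
  · rw [← hp.coeff_symm hj]
    exact hp.coeff_le_coeff (by omega) (by omega)
  · rw [hp.coeff_eq_zero hj]
    exact hp.coeff_nonneg i

lemma X_mul (hp : IsSymmUnimodal d p) : IsSymmUnimodal (d + 2) (X * p) where
  coeff_nonneg k := by
    rcases k with _ | k
    · simp
    · rw [coeff_X_mul]; exact hp.coeff_nonneg k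
  natDegree_le := natDegree_mul_le.trans
    (by have := natDegree_X_le (R := R); have := hp.natDegree_le; omega)
  reflect_eq := by
    have h2 : reflect 2 (X : R[X]) = X := by simpa using reflect_monomial (R := R) 2 1
    rw [add_comm, reflect_mul X p (natDegree_X_le.trans (by norm_num)) hp.natDegree_le,
      hp.reflect_eq, h2]
  coeff_le_coeff_succ k hk := by
    rcases k with _ | k
    · simpa using hp.coeff_nonneg 0
    · simp only [coeff_X_mul]
      exact hp.coeff_le_coeff_succ k (by omega)

lemma coeff_peelLayer_eq_zero (hq : IsSymmUnimodal e q) {k : ℕ} (hk : e < k + 2) :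
    (peelLayer e q).coeff k = 0 := by
  rw [coeff_peelLayer]
  rcases (show e < k + 1 ∨ e = k + 1 by omega) with hk | rfl
  · rw [hq.coeff_eq_zero hk, if_neg (by omega), mul_zero, sub_zero]
  · rw [if_pos le_rfl, mul_one, ← hq.coeff_symm (Nat.zero_le _), Nat.sub_zero, sub_self]

lemma coeff_X_pow_mul_le (hp : IsSymmUnimodal d p) {a b n : ℕ} (hab : a ≤ b)
    (h : d + a + b ≤ 2 * n) : (X ^ a * p).coeff n ≤ (X ^ b * p).coeff n := by
  rw [coeff_X_pow_mul', coeff_X_pow_mul']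
  split_ifs with ha hb hb
  · exact hp.coeff_le_coeff_of_le_add (by omega) (by omega)
  · rw [hp.coeff_eq_zero (by omega)]
  · omega
  · rfl

variable [IsOrderedRing R]

lemma one : IsSymmUnimodal 0 (1 : R[X]) where
  coeff_nonneg k := by rw [coeff_one]; split_ifs <;> simp
  natDegree_le := natDegree_one.le
  reflect_eq := by simp
  coeff_le_coeff_succ k hk := by omega

lemma add (hp : IsSymmUnimodal d p) (hq : IsSymmUnimodal d q) : IsSymmUnimodal d (p + q) where
  coeff_nonneg k := by rw [coeff_add]; exact add_nonneg (hp.coeff_nonneg k) (hq.coeff_nonneg k)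
  natDegree_le := (natDegree_add_le p q).trans (max_le hp.natDegree_le hq.natDegree_le)
  reflect_eq := by rw [reflect_add, hp.reflect_eq, hq.reflect_eq]
  coeff_le_coeff_succ k hk := by
    simp only [coeff_add]
    exact add_le_add (hp.coeff_le_coeff_succ k hk) (hq.coeff_le_coeff_succ k hk)

lemma C_mul (hp : IsSymmUnimodal d p) {c : R} (hc : 0 ≤ c) : IsSymmUnimodal d (C c * p) where
  coeff_nonneg k := by rw [coeff_C_mul]; exact mul_nonneg hc (hp.coeff_nonneg k)
  natDegree_le := (natDegree_C_mul_le c p).trans hp.natDegree_le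
  reflect_eq := by rw [reflect_C_mul, hp.reflect_eq]
  coeff_le_coeff_succ k hk := by
    simp only [coeff_C_mul]
    exact mul_le_mul_of_nonneg_left (hp.coeff_le_coeff_succ k hk) hc

lemma mul_geomSum (hp : IsSymmUnimodal d p) (e : ℕ) :
    IsSymmUnimodal (d + e) (p * ∑ i ∈ range (e + 1), X ^ i) where
  coeff_nonneg k := by
    rw [mul_sum, finsetSum_coeff]
    refine sum_nonneg fun i _ => ?_
    rw [coeff_mul_X_pow']
    split_ifs
    exacts [hp.coeff_nonneg _, le_rfl]
  natDegree_le := natDegree_mul_le.trans (add_le_add hp.natDegree_le (natDegree_geomSum_X_le e))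
  reflect_eq := by
    have hB : reflect e (∑ i ∈ range (e + 1), X ^ i : R[X]) = ∑ i ∈ range (e + 1), X ^ i := by
      ext k
      rw [coeff_reflect, coeff_geomSum_X, coeff_geomSum_X]
      by_cases hk : k ≤ e
      · rw [revAt_le hk, if_pos (Nat.sub_le e k), if_pos hk]
      · rw [revAt_eq_self_of_lt (not_le.mp hk)]
    rw [reflect_mul p _ hp.natDegree_le (natDegree_geomSum_X_le e), hp.reflect_eq, hB]
  coeff_le_coeff_succ k hk := by
    set B : R[X] := ∑ i ∈ range (e + 1), X ^ i
    -- consecutive differences of the window sums `(p * B).coeff k` are `p_{k+1} - p_{k-e}`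
    have key : p * B * X - p * B = X ^ (e + 1) * p - p := by
      rw [← mul_sub_one, mul_assoc, geom_sum_mul]; ring
    replace key := congrArg (fun f => coeff f (k + 1)) key
    simp only [coeff_sub, coeff_mul_X, coeff_X_pow_mul'] at key
    rw [← sub_nonpos, key, sub_nonpos]
    split_ifs with hek
    · exact hp.coeff_le_coeff (by omega) (by omega)
    · exact hp.coeff_nonneg _

lemma peelLayer (hq : IsSymmUnimodal e q) : IsSymmUnimodal (e - 2) (peelLayer e q) where
  coeff_nonneg k := by
    rw [coeff_peelLayer]
    split_ifs with hk
    · rw [mul_one, sub_nonneg]; exact hq.coeff_le_coeff (Nat.zero_le _) (by omega)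
    · rw [mul_zero, sub_zero]; exact hq.coeff_nonneg _
  natDegree_le := natDegree_le_iff_coeff_eq_zero.mpr fun k hk =>
    hq.coeff_peelLayer_eq_zero (by omega)
  reflect_eq := by
    ext k
    rw [coeff_reflect]
    by_cases hk : k + 2 ≤ e
    · rw [revAt_le (by omega), coeff_peelLayer, coeff_peelLayer, if_pos (by omega),
        if_pos (by omega), show e - 2 - k + 1 = e - (k + 1) by omega, hq.coeff_symm (by omega)]
    · rw [hq.coeff_peelLayer_eq_zero (k := k) (by omega), hq.coeff_peelLayer_eq_zero]
      by_cases hk' : k ≤ e - 2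
      · rw [revAt_le hk']; omega
      · rw [revAt_eq_self_of_lt (by omega)]; omega
  coeff_le_coeff_succ k hk := by
    rw [coeff_peelLayer, coeff_peelLayer, if_pos (by omega), if_pos (by omega), mul_one]
    exact sub_le_sub_right (hq.coeff_le_coeff_succ (k + 1) (by omega)) _

theorem mul (hp : IsSymmUnimodal d p) (hq : IsSymmUnimodal e q) :
    IsSymmUnimodal (d + e) (p * q) := by
  induction e using Nat.strong_induction_on generalizing q with
  | _ e ih =>
  have hbase := (hp.mul_geomSum e).C_mul (hq.coeff_nonneg 0)
  rw [eq_C_mul_geomSum_add_X_mul_peelLayer e q, mul_add, mul_left_comm, mul_left_comm p X]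
  rcases lt_or_ge e 2 with he | he
  · have hzero : Polynomial.peelLayer e q = 0 := by
      ext k; rw [hq.coeff_peelLayer_eq_zero (by omega), coeff_zero]
    rw [hzero, mul_zero, mul_zero, add_zero]
    exact hbase
  · have hshift := (ih (e - 2) (by omega) hq.peelLayer).X_mul
    rw [show d + (e - 2) + 2 = d + e by omega] at hshift
    exact hbase.add hshift

lemma prod {ι : Type*} {T : Finset ι} {f : ι → R[X]} {d : ι → ℕ}
    (hf : ∀ i ∈ T, IsSymmUnimodal (d i) (f i)) :
    IsSymmUnimodal (∑ i ∈ T, d i) (∏ i ∈ T, f i) := by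
  classical
  induction T using Finset.induction_on with
  | empty => simpa using one
  | insert i T hi ih =>
    rw [sum_insert hi, prod_insert hi]
    exact (hf i (mem_insert_self i T)).mul (ih fun j hj => hf j (mem_insert_of_mem hj))

end IsSymmUnimodal

end SymmUnimodal

section truncBinomial

variable (R : Type*)

noncomputable def truncBinomial [Semiring R] (s l u : ℕ) : R[X] :=
  ∑ v ∈ Icc l u, C (s.choose v : R) * X ^ v

lemma coeff_truncBinomial [Semiring R] (s l u k : ℕ) :
    (truncBinomial R s l u).coeff k = if k ∈ Icc l u then (s.choose k : R) else 0 := by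
  simp only [truncBinomial, finsetSum_coeff, coeff_C_mul_X_pow, sum_ite_eq]

variable {R}

lemma isSymmUnimodal_truncBinomial [CommRing R] [PartialOrder R] [IsOrderedRing R]
    {s l u : ℕ} (h : l + u = s) : IsSymmUnimodal s (truncBinomial R s l u) where
  coeff_nonneg k := by
    rw [coeff_truncBinomial]
    split_ifs
    exacts [Nat.cast_nonneg _, le_rfl]
  natDegree_le := natDegree_sum_le_of_forall_le _ _ fun v hv =>
    (natDegree_C_mul_X_pow_le _ v).trans (by rw [mem_Icc] at hv; omega)
  reflect_eq := by
    ext k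
    rw [coeff_reflect, coeff_truncBinomial, coeff_truncBinomial]
    by_cases hk : k ≤ s
    · rw [revAt_le hk, Nat.choose_symm hk]
      simp only [mem_Icc]
      by_cases hkI : l ≤ k ∧ k ≤ u
      · rw [if_pos (by omega), if_pos hkI]
      · rw [if_neg (by omega), if_neg hkI]
    · rw [revAt_eq_self_of_lt (not_le.mp hk)]
  coeff_le_coeff_succ k hk := by
    rw [coeff_truncBinomial, coeff_truncBinomial]
    simp only [mem_Icc]
    split_ifs with hk1 hk2
    · exact Nat.mono_cast (Nat.choose_le_choose_succ_of_two_mul_lt (by omega))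
    · omega
    · exact Nat.cast_nonneg _
    · rfl

lemma C_mul_truncBinomial_sub_X_add_one_mul_derivative [CommRing R] {s l u : ℕ}
    (h : l ≤ u + 1) :
    C (s : R) * truncBinomial R s l u - (X + 1) * derivative (truncBinomial R s l u)
      = C (((u + 1) * s.choose (u + 1) : ℕ) : R) * X ^ u
        - C ((l * s.choose l : ℕ) : R) * X ^ (l - 1) := by
  have hmonomial : ∀ v, C (s : R) * (C (s.choose v : R) * X ^ v)
      - (X + 1) * derivative (C (s.choose v : R) * X ^ v)
      = C (((v + 1) * s.choose (v + 1) : ℕ) : R) * X ^ (v + 1 - 1)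
        - C ((v * s.choose v : ℕ) : R) * X ^ (v - 1) := by
    intro v
    rcases v with _ | v
    · simp
    · have hc := congrArg (fun n : ℕ => (n : R[X]))
        (Nat.succ_mul_choose_succ_add_mul_choose s (v + 1))
      push_cast at hc
      rw [derivative_C_mul_X_pow, Nat.add_sub_cancel, Nat.add_sub_cancel]
      simp only [map_mul, map_natCast]
      push_cast
      linear_combination -X ^ (v + 1) * hc
  rw [truncBinomial, mul_sum, derivative_sum, mul_sum, ← sum_sub_distrib,
    sum_congr rfl fun v _ => hmonomial v, ← Ico_add_one_right_eq_Icc,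
    sum_Ico_sub (fun v => C ((v * s.choose v : ℕ) : R) * X ^ (v - 1)) h, Nat.add_sub_cancel]

end truncBinomial

theorem succ_mul_coeff_prod_truncBinomial_le {ι : Type*} [Fintype ι] [DecidableEq ι]
    {s l u : ι → ℕ} (hlu : ∀ j, l j ≤ u j) (hsym : ∀ j, l j + u j = s j) {n : ℕ}
    (hn : ∑ j, s j ≤ 2 * n) :
    (n + 1) * (∏ j, truncBinomial ℤ (s j) (l j) (u j)).coeff (n + 1)
      ≤ ((∑ j, s j : ℕ) - n : ℤ) * (∏ j, truncBinomial ℤ (s j) (l j) (u j)).coeff n := by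
  rw [← sub_nonneg, ← coeff_C_mul_sub_X_add_one_mul_derivative, Nat.cast_sum,
    C_sum_mul_prod_sub_mul_derivative_prod, finsetSum_coeff]
  refine sum_nonneg fun j _ => ?_
  have hM : IsSymmUnimodal (∑ i ∈ univ.erase j, s i)
      (∏ i ∈ univ.erase j, truncBinomial ℤ (s i) (l i) (u i)) :=
    IsSymmUnimodal.prod fun i _ => isSymmUnimodal_truncBinomial (hsym i)
  have hsplit := sum_erase_add univ s (mem_univ j)
  rw [C_mul_truncBinomial_sub_X_add_one_mul_derivative (by have := hlu j; omega),
    Nat.succ_mul_choose_succ_of_add_eq (hsym j), ← mul_sub, mul_assoc, coeff_C_mul, sub_mul,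
    coeff_sub]
  exact mul_nonneg (Nat.cast_nonneg _)
    (sub_nonneg.mpr (hM.coeff_X_pow_mul_le (by have := hlu j; omega)
      (by have := hsym j; omega)))

end Polynomial

theorem Nat.mul_choose_le_mul_choose_of_succ_mul_le (a : ℕ → ℕ) {t n : ℕ}
    (hstep : ∀ k, n ≤ k → k < t → (k + 1) * a (k + 1) ≤ (t - k) * a k)
    {n' : ℕ} (hnn' : n ≤ n') (hn't : n' ≤ t) : a n' * t.choose n ≤ a n * t.choose n' := by
  induction n', hnn' using Nat.le_induction with
  | base => rfl
  | succ k hnk ih =>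
    have hstep' : a (k + 1) * t.choose k ≤ a k * t.choose (k + 1) := by
      refine Nat.le_of_mul_le_mul_right ?_ k.succ_pos
      calc a (k + 1) * t.choose k * (k + 1) = (k + 1) * a (k + 1) * t.choose k := by ring
        _ ≤ (t - k) * a k * t.choose k := Nat.mul_le_mul_right _ (hstep k hnk (by omega))
        _ = a k * (t.choose k * (t - k)) := by ring
        _ = a k * t.choose (k + 1) * (k + 1) := by rw [← Nat.choose_succ_right_eq]; ring
    refine Nat.le_of_mul_le_mul_right ?_ (Nat.choose_pos (by omega : k ≤ t))
    calc a (k + 1) * t.choose n * t.choose k = a (k + 1) * t.choose k * t.choose n := by ring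
      _ ≤ a k * t.choose (k + 1) * t.choose n := Nat.mul_le_mul_right _ hstep'
      _ = a k * t.choose n * t.choose (k + 1) := by ring
      _ ≤ a n * t.choose k * t.choose (k + 1) := Nat.mul_le_mul_right _ (ih (by omega))
      _ = a n * t.choose (k + 1) * t.choose k := by ring

theorem symmetric_core_ordering_upper_general (m : ℕ) (s l u : Fin m → ℕ)
    (hlu : ∀ j, l j ≤ u j)
    (hsym : ∀ j, l j + u j = s j)
    (t : ℕ) (ht : t = ∑ j, s j)
    (N : ℕ → ℕ)
    (hN : ∀ r, N r = ∑ x ∈ (Fintype.piFinset fun j => Finset.Icc (l j) (u j)).filter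
        (fun x => ∑ j, x j = r), ∏ j, (s j).choose (x j))
    (n n' : ℕ) (h1 : t ≤ 2 * n) (h2 : n < n') (h3 : n' ≤ t) :
    N n' * t.choose n ≤ N n * t.choose n' := by
  have hN_coeff : ∀ r, (N r : ℤ) = (∏ j, truncBinomial ℤ (s j) (l j) (u j)).coeff r := by
    intro r
    simp only [hN, truncBinomial, coeff_prod_sum_C_mul_X_pow]
    push_cast
    rfl
  subst ht
  refine Nat.mul_choose_le_mul_choose_of_succ_mul_le N (fun k hnk hkt => ?_) h2.le h3
  have hstep := succ_mul_coeff_prod_truncBinomial_le hlu hsym (n := k) (by omega)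
  rw [← hN_coeff, ← hN_coeff] at hstep
  zify [hkt.le]
  push_cast at hstep
  exact hstep

/-- Stochastic ordering of symmetric core event probabilities for the multiple
hypergeometric distribution: for `⌈t/2⌉ ≤ n < n' ≤ t` (here `t ≤ 2n`),
`P_n[X ∈ B] ≥ P_{n'}[X ∈ B]`, stated in cross-multiplied form
`N(n)·C(t,n') ≥ N(n')·C(t,n)`. -/
theorem symmetric_core_ordering_upper (m : ℕ) (hm : 2 ≤ m) (s l u : Fin m → ℕ)
    (hlu : ∀ j, l j ≤ u j) (hus : ∀ j, u j ≤ s j)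
    (hsym : ∀ j, l j + u j = s j)
    (t : ℕ) (ht : t = ∑ j, s j)
    (N : ℕ → ℕ)
    (hN : ∀ r, N r = ∑ x ∈ (Fintype.piFinset fun j => Finset.Icc (l j) (u j)).filter
        (fun x => ∑ j, x j = r), ∏ j, (s j).choose (x j))
    (n n' : ℕ) (h1 : t ≤ 2 * n) (h2 : n < n') (h3 : n' ≤ t) :
    N n' * t.choose n ≤ N n * t.choose n' :=
  symmetric_core_ordering_upper_general m s l u hlu hsym t ht N hN n n' h1 h2 h3
end

section
/- Let m ≥ 2, let s_1,…,s_m be nonnegative integers with total t = s_1+⋯+s_m, and let l_j, u_j be integers with 0 ≤ l_j ≤ u_j ≤ s_j and l_j + u_j = s_j for each j (symmetric core constraints). For a nonnegative integer n let N(n) = ∑ ∏_{j=1}^m C(s_j, x_j), the sum over all x ∈ ℕ^m with x_1+⋯+x_m = n and l_j ≤ x_j ≤ u_j for all j. Let n* = ⌈t/2⌉. Then for every n with 0 ≤ n ≤ t, N(n)·C(t, n*) ≤ N(n*)·C(t, n); i.e., the symmetric core probability P_n[X ∈ B] = N(n)/C(t,n) is maximized at n = ⌈t/2⌉ (equivalently,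 at n = ⌊t/2⌋). -/
/-!
`N(n)` is the coefficient of `Xⁿ` in `P = ∏ⱼ fⱼ`, where `fⱼ = ∑_{lⱼ ≤ x ≤ uⱼ} C(sⱼ, x) Xˣ` is a
symmetric truncation of `(1 + X)^{sⱼ}`, so `P` is palindromic of degree `t`. The identity
`(1 + X) f' = s f` for `f = (1 + X)^s` survives truncation up to two boundary monomials, and the
product rule turns it into
`(n + 1) N(n + 1) + n N(n) = t N(n) + ∑ⱼ lⱼ C(sⱼ, lⱼ) (N⁽ʲ⁾(n + 1 - lⱼ) - N⁽ʲ⁾(n - uⱼ))`,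
where `N⁽ʲ⁾` counts without colour `j`. By induction on the number of colours `N⁽ʲ⁾` is palindromic
and unimodal, and its two arguments are placed so that the bracket is nonnegative. This says
`N(n) / C(t, n) ≤ N(n + 1) / C(t, n + 1)` for `2n + 1 ≤ t`; the symmetry `n ↦ t - n` does the rest.
-/

open Polynomial Finset

/-- `N k / C(T, k) ≤ N (k + 1) / C(T, k + 1)` while `2k + 1 ≤ T`, cleared of denominators with
`(k + 1) C(T, k + 1) = (T - k) C(T, k)`. -/
def ChooseRatioStep (T : ℕ) (N : ℕ → ℕ) : Prop :=
  ∀ k, 2 * k + 1 ≤ T → (T - k) * N k ≤ (k + 1) * N (k + 1)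

namespace ChooseRatioStep

variable {T : ℕ} {N : ℕ → ℕ}

theorem monotoneOn (h : ChooseRatioStep T N) : MonotoneOn N (Set.Iic ((T + 1) / 2)) := by
  refine monotoneOn_of_le_succ Set.ordConnected_Iic fun k _ _ hk => ?_
  rw [Order.succ_eq_add_one, Set.mem_Iic] at hk
  refine Nat.le_of_mul_le_mul_left ?_ k.succ_pos
  calc (k + 1) * N k ≤ (T - k) * N k := Nat.mul_le_mul_right _ (by omega)
    _ ≤ (k + 1) * N (k + 1) := h k (by omega)

theorem monotoneOn_div_choose (h : ChooseRatioStep T N) :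
    MonotoneOn (fun k => (N k : ℚ) / T.choose k) (Set.Iic ((T + 1) / 2)) := by
  refine monotoneOn_of_le_succ Set.ordConnected_Iic fun k _ _ hk => ?_
  rw [Order.succ_eq_add_one, Set.mem_Iic] at hk
  have hcross : N k * T.choose (k + 1) ≤ N (k + 1) * T.choose k := by
    refine Nat.le_of_mul_le_mul_right ?_ k.succ_pos
    calc N k * T.choose (k + 1) * (k + 1) = (T - k) * N k * T.choose k := by
          rw [mul_assoc, Nat.choose_succ_right_eq]; ring
      _ ≤ (k + 1) * N (k + 1) * T.choose k := Nat.mul_le_mul_right _ (h k (by omega))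
      _ = N (k + 1) * T.choose k * (k + 1) := by ring
  rw [Order.succ_eq_add_one, div_le_div_iff₀ (mod_cast Nat.choose_pos (by omega))
    (mod_cast Nat.choose_pos (by omega))]
  exact_mod_cast hcross

theorem le_of_add_le (h : ChooseRatioStep T N) (hsymm : ∀ r ≤ T, N (T - r) = N r) {a b : ℕ}
    (hab : a ≤ b) (habT : a + b ≤ T) : N a ≤ N b := by
  rcases le_or_gt b ((T + 1) / 2) with hb | hb
  · exact h.monotoneOn (hab.trans hb) hb hab
  · rw [← hsymm b (by omega)]
    exact h.monotoneOn (by simp only [Set.mem_Iic]; omega) (by simp only [Set.mem_Iic]; omega)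
      (by omega)

theorem mul_choose_le_mul_choose_half (h : ChooseRatioStep T N)
    (hsymm : ∀ r ≤ T, N (T - r) = N r) {n : ℕ} (hn : n ≤ T) :
    N n * T.choose ((T + 1) / 2) ≤ N ((T + 1) / 2) * T.choose n := by
  wlog hhalf : n ≤ (T + 1) / 2 generalizing n
  · rw [← hsymm n hn, ← Nat.choose_symm hn]
    exact this (Nat.sub_le _ _) (by omega)
  have hratio := h.monotoneOn_div_choose hhalf Set.self_mem_Iic hhalf
  rwa [div_le_div_iff₀ (mod_cast Nat.choose_pos hn) (mod_cast Nat.choose_pos (by omega)),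
    ← Nat.cast_mul, ← Nat.cast_mul, Nat.cast_le] at hratio

end ChooseRatioStep

noncomputable def coreBinomial (l u : ℕ) : ℕ[X] :=
  ∑ x ∈ Icc l u, C ((l + u).choose x) * X ^ x

noncomputable def corePoly {ι : Type*} (l u : ι → ℕ) (A : Finset ι) : ℕ[X] :=
  ∏ j ∈ A, coreBinomial (l j) (u j)

theorem coeff_coreBinomial (l u n : ℕ) :
    (coreBinomial l u).coeff n = if n ∈ Icc l u then (l + u).choose n else 0 := by
  simp only [coreBinomial, finsetSum_coeff, coeff_C_mul_X_pow, sum_ite_eq]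

theorem natDegree_coreBinomial_le (l u : ℕ) : (coreBinomial l u).natDegree ≤ l + u :=
  natDegree_le_iff_coeff_eq_zero.2 fun n hn => by
    rw [coeff_coreBinomial, if_neg (by simp only [mem_Icc]; omega)]

theorem reflect_coreBinomial (l u : ℕ) :
    reflect (l + u) (coreBinomial l u) = coreBinomial l u := by
  ext n
  rw [coeff_reflect, coeff_coreBinomial, coeff_coreBinomial]
  rcases le_or_gt n (l + u) with hn | hn
  · rw [revAt_le hn, Nat.choose_symm hn]
    simp only [mem_Icc]
    congr 1
    exact propext (by omega)
  · rw [revAt_eq_self_of_lt hn]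

theorem coeff_derivative_mul_one_add_X (p : ℕ[X]) (n : ℕ) :
    (derivative p * (1 + X)).coeff n = (n + 1) * p.coeff (n + 1) + n * p.coeff n := by
  rcases n with _ | n
  · simp [mul_coeff_zero, coeff_derivative]
  · simp only [mul_add, mul_one, coeff_add, coeff_mul_X, coeff_derivative]
    push_cast
    ring

/-- Inside `[l, u]` this is `(k + 1) C(s, k + 1) + k C(s, k) = s C(s, k)`; at the two ends the
monomials make up for the truncation, since `C(s, u) = C(s, l)`. -/
theorem derivative_coreBinomial_mul_one_add_X {l u : ℕ} (h : l ≤ u) :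
    derivative (coreBinomial l u) * (1 + X) + C (l * (l + u).choose l) * X ^ u
      = (l + u) • coreBinomial l u + C (l * (l + u).choose l) * X ^ (l - 1) := by
  ext n
  simp only [coeff_add, coeff_derivative_mul_one_add_X, coeff_smul, smul_eq_mul,
    coeff_coreBinomial, coeff_C_mul_X_pow, mem_Icc]
  have hpascal (k : ℕ) (hk : k ≤ l + u) :
      (k + 1) * (l + u).choose (k + 1) + k * (l + u).choose k = (l + u) * (l + u).choose k := by
    rw [mul_comm, Nat.choose_succ_right_eq, mul_comm k, ← Nat.mul_add, Nat.sub_add_cancel hk,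
      mul_comm]
  have hcu : (l + u).choose u = (l + u).choose l := by
    rw [Nat.choose_symm_add]
  split_ifs <;> grind

section corePoly

variable {ι : Type*} (l u : ι → ℕ)

theorem reflect_corePoly (A : Finset ι) :
    reflect (∑ j ∈ A, (l j + u j)) (corePoly l u A) = corePoly l u A := by
  classical
  induction A using Finset.induction_on with
  | empty => simp [corePoly]
  | insert a A ha ih =>
    rw [corePoly, prod_insert ha, sum_insert ha, reflect_mul _ _ (natDegree_coreBinomial_le _ _)
      ((natDegree_prod_le _ _).trans (sum_le_sum fun j _ => natDegree_coreBinomial_le _ _)),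
      reflect_coreBinomial, ← corePoly, ih]

theorem coeff_corePoly_sub (A : Finset ι) {r : ℕ} (hr : r ≤ ∑ j ∈ A, (l j + u j)) :
    (corePoly l u A).coeff (∑ j ∈ A, (l j + u j) - r) = (corePoly l u A).coeff r := by
  conv_rhs => rw [← reflect_corePoly, coeff_reflect, revAt_le hr]

theorem coeff_corePoly_univ [Fintype ι] [DecidableEq ι] (r : ℕ) :
    (corePoly l u univ).coeff r = ∑ x ∈ (Fintype.piFinset fun j => Icc (l j) (u j)).filter
        (fun x => ∑ j, x j = r), ∏ j, (l j + u j).choose (x j) := by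
  simp only [corePoly, coreBinomial, prod_univ_sum, prod_mul_distrib, prod_pow_eq_pow_sum,
    ← map_prod, finsetSum_coeff, coeff_C_mul_X_pow, sum_filter, eq_comm]

variable [DecidableEq ι] (A : Finset ι)

theorem derivative_corePoly_mul_one_add_X (h : ∀ j ∈ A, l j ≤ u j) :
    derivative (corePoly l u A) * (1 + X)
        + ∑ j ∈ A, C (l j * (l j + u j).choose (l j)) * X ^ u j * corePoly l u (A.erase j)
      = (∑ j ∈ A, (l j + u j)) • corePoly l u A
        + ∑ j ∈ A, C (l j * (l j + u j).choose (l j)) * X ^ (l j - 1)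
            * corePoly l u (A.erase j) := by
  calc _ = ∑ j ∈ A, corePoly l u (A.erase j) * (derivative (coreBinomial (l j) (u j)) * (1 + X)
            + C (l j * (l j + u j).choose (l j)) * X ^ u j) := by
        rw [corePoly, derivative_prod_finset, sum_mul, ← sum_add_distrib]
        exact sum_congr rfl fun j _ => by rw [corePoly]; ring
    _ = ∑ j ∈ A, corePoly l u (A.erase j) * ((l j + u j) • coreBinomial (l j) (u j)
            + C (l j * (l j + u j).choose (l j)) * X ^ (l j - 1)) :=
        sum_congr rfl fun j hj => by rw [derivative_coreBinomial_mul_one_add_X (h j hj)]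
    _ = _ := by
        rw [sum_smul, ← sum_add_distrib]
        refine sum_congr rfl fun j hj => ?_
        unfold corePoly
        rw [← mul_prod_erase A _ hj]
        simp only [nsmul_eq_mul]
        ring

theorem coeff_corePoly_succ (h : ∀ j ∈ A, l j ≤ u j) (n : ℕ) :
    (n + 1) * (corePoly l u A).coeff (n + 1) + n * (corePoly l u A).coeff n
        + ∑ j ∈ A, l j * (l j + u j).choose (l j) *
            (if u j ≤ n then (corePoly l u (A.erase j)).coeff (n - u j) else 0)
      = (∑ j ∈ A, (l j + u j)) * (corePoly l u A).coeff n
        + ∑ j ∈ A, l j * (l j + u j).choose (l j) *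
            (if l j - 1 ≤ n then (corePoly l u (A.erase j)).coeff (n - (l j - 1)) else 0) := by
  simpa only [coeff_add, coeff_derivative_mul_one_add_X, coeff_smul, smul_eq_mul,
    finsetSum_coeff, mul_assoc, coeff_C_mul, coeff_X_pow_mul'] using
    congrArg (coeff · n) (derivative_corePoly_mul_one_add_X l u A h)

theorem chooseRatioStep_coeff_corePoly (h : ∀ j ∈ A, l j ≤ u j) :
    ChooseRatioStep (∑ j ∈ A, (l j + u j)) (corePoly l u A).coeff := by
  induction A using Finset.strongInduction with
  | H A ih =>
    intro n hn
    have hboundary : ∑ j ∈ A, l j * (l j + u j).choose (l j) *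
          (if u j ≤ n then (corePoly l u (A.erase j)).coeff (n - u j) else 0)
        ≤ ∑ j ∈ A, l j * (l j + u j).choose (l j) *
          (if l j - 1 ≤ n then (corePoly l u (A.erase j)).coeff (n - (l j - 1)) else 0) := by
      refine sum_le_sum fun j hj => Nat.mul_le_mul_left _ ?_
      have hT := sum_erase_add A (fun i => l i + u i) hj
      have hlu := h j hj
      split_ifs with hu hl
      · exact (ih _ (erase_ssubset hj) fun i hi => h i (mem_of_mem_erase hi)).le_of_add_le
          (fun r hr => coeff_corePoly_sub l u _ hr) (by omega) (by omega)
      · omega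
      · exact Nat.zero_le _
      · exact Nat.zero_le _
    have hstep := coeff_corePoly_succ l u A h n
    rw [Nat.sub_mul, Nat.sub_le_iff_le_add]
    linarith

end corePoly

theorem symmetric_core_max_at_half_general (m : ℕ) (s l u : Fin m → ℕ)
    (hlu : ∀ j, l j ≤ u j)
    (hsym : ∀ j, l j + u j = s j)
    (t : ℕ) (ht : t = ∑ j, s j)
    (N : ℕ → ℕ)
    (hN : ∀ r, N r = ∑ x ∈ (Fintype.piFinset fun j => Finset.Icc (l j) (u j)).filter
        (fun x => ∑ j, x j = r), ∏ j, (s j).choose (x j))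
    (nstar : ℕ) (hstar : nstar = (t + 1) / 2)
    (n : ℕ) (hn : n ≤ t) :
    N n * t.choose nstar ≤ N nstar * t.choose n := by
  obtain rfl : s = fun j => l j + u j := funext fun j => (hsym j).symm
  obtain rfl : N = (corePoly l u univ).coeff :=
    funext fun r => (hN r).trans (coeff_corePoly_univ l u r).symm
  subst ht hstar
  exact (chooseRatioStep_coeff_corePoly l u univ fun j _ => hlu j).mul_choose_le_mul_choose_half
    (fun r hr => coeff_corePoly_sub l u univ hr) hn

/-- The symmetric core probability `P_n[X ∈ B] = N(n)/C(t,n)` is maximized at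
`n* = ⌈t/2⌉`, stated in cross-multiplied form: `N(n)·C(t,n*) ≤ N(n*)·C(t,n)`
for all `0 ≤ n ≤ t`. -/
theorem symmetric_core_max_at_half (m : ℕ) (hm : 2 ≤ m) (s l u : Fin m → ℕ)
    (hlu : ∀ j, l j ≤ u j) (hus : ∀ j, u j ≤ s j)
    (hsym : ∀ j, l j + u j = s j)
    (t : ℕ) (ht : t = ∑ j, s j)
    (N : ℕ → ℕ)
    (hN : ∀ r, N r = ∑ x ∈ (Fintype.piFinset fun j => Finset.Icc (l j) (u j)).filter
        (fun x => ∑ j, x j = r), ∏ j, (s j).choose (x j))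
    (nstar : ℕ) (hstar : nstar = (t + 1) / 2)
    (n : ℕ) (hn : n ≤ t) :
    N n * t.choose nstar ≤ N nstar * t.choose n :=
  symmetric_core_max_at_half_general m s l u hlu hsym t ht N hN nstar hstar n hn
end

section
/- Let t, s, l, u, n be nonnegative integers with l + u = s, 1 ≤ l ≤ u, s ≤ t, u ≤ n, n − u ≤ t − s, and 2n ≥ t. Then C(t − s, n − l + 1) < C(t − s, n − u), where binomial coefficients C(a, b) are taken to be 0 when b > a. -/
private lemma choose_succ_le_of_half (m k : ℕ) (h : m ≤ 2 * k) :
    m.choose (k + 1) ≤ m.choose k := by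
  rcases le_or_gt m k with hk | hk
  · rw [Nat.choose_eq_zero_of_lt (by omega)]; exact Nat.zero_le _
  · have hpos : 0 < m.choose k := Nat.choose_pos (le_of_lt hk)
    have heq := Nat.choose_succ_right_eq m k
    have : m.choose (k + 1) * (k + 1) ≤ m.choose k * (k + 1) := by
      rw [heq]; exact Nat.mul_le_mul_left _ (by omega)
    exact Nat.le_of_mul_le_mul_right this (Nat.succ_pos k)

private lemma choose_succ_lt_of_half (m k : ℕ) (h : m ≤ 2 * k) (hk : k < m) :
    m.choose (k + 1) < m.choose k := by
  have hpos : 0 < m.choose k := Nat.choose_pos (le_of_lt hk)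
  have heq := Nat.choose_succ_right_eq m k
  have : m.choose (k + 1) * (k + 1) < m.choose k * (k + 1) := by
    rw [heq]; exact Nat.mul_lt_mul_of_le_of_lt (le_refl _) (by omega) hpos
  exact Nat.lt_of_mul_lt_mul_right this

private lemma choose_anti_of_half (m r k : ℕ) (h : m ≤ 2 * r) (hrk : r ≤ k) :
    m.choose k ≤ m.choose r := by
  induction k with
  | zero => have : r = 0 := by omega
            simp [this]
  | succ k ih =>
    rcases Nat.lt_or_ge r (k + 1) with h1 | h1
    · have hrk' : r ≤ k := by omega
      exact le_trans (choose_succ_le_of_half m k (by omega)) (ih hrk')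
    · have : r = k + 1 := by omega
      simp [this]

private lemma choose_lt_of_half (m r k : ℕ) (h : m ≤ 2 * r) (hrm : r ≤ m)
    (hrk : r < k) : m.choose k < m.choose r := by
  rcases eq_or_lt_of_le hrm with rfl | hrm'
  · rw [Nat.choose_eq_zero_of_lt hrk, Nat.choose_self]; omega
  · calc m.choose k ≤ m.choose (r + 1) := choose_anti_of_half m (r+1) k (by omega) hrk
      _ < m.choose r := choose_succ_lt_of_half m r h hrm'

/-- Key binomial-coefficient inequality in the proof of the main theorem:
under the symmetric constraint `l + u = s` with `1 ≤ l ≤ u`, `s ≤ t`,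
`u ≤ n`, `n - u ≤ t - s` and `2n ≥ t`, one has
`C(t-s, n-l+1) < C(t-s, n-u)`. -/
theorem choose_strict_ineq (t s l u n : ℕ)
    (hlu : l + u = s) (hl : 1 ≤ l) (hlu2 : l ≤ u)
    (hst : s ≤ t) (hun : u ≤ n) (hnu : n - u ≤ t - s) (hn : t ≤ 2 * n) :
    (t - s).choose (n - l + 1) < (t - s).choose (n - u) := by
  set m := t - s with hm
  set j := n - u with hj
  set k := n - l + 1 with hk
  have hjm : j ≤ m := hnu
  have hkj : j < k := by omega
  have hkmj : m - j < k := by omega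
  rcases le_or_gt (m - j) j with hcase | hcase
  · exact choose_lt_of_half m j k (by omega) hjm hkj
  · rw [← Nat.choose_symm hjm]
    exact choose_lt_of_half m (m - j) k (by omega) (by omega) hkmj
end

section
/- Let t, s, l, u, n be nonnegative integers with l + u = s, 1 ≤ l ≤ u, u < s, s ≤ t, u ≤ n, n − u ≤ t − s, and 2n ≥ t. Then C(s, l − 1)·C(t − s, n − l + 1)·(s − l + 1) < C(s, u)·C(t − s, n − u)·(s − u), where binomial coefficients C(a, b) are taken to be 0 when b > a. Equivalently, for the univariate hypergeometric variable X ~ H_2(n; s, t − s) one has P_n[X = l − 1]·(s − l + 1) < P_n[X = u]·(s − u). -/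
private lemma choose_step (m k : ℕ) (h : 2 * (k + 1) ≤ m) :
    m.choose k < m.choose (k + 1) := by
  have h1 := Nat.choose_succ_right_eq m k
  have hpos : 0 < m.choose k := Nat.choose_pos (by omega)
  have h2 : k + 2 ≤ m - k := by omega
  nlinarith [h1, hpos, h2]

private lemma choose_mono_strict (m : ℕ) : ∀ b c : ℕ, c < b → 2 * b ≤ m →
    m.choose c < m.choose b := by
  intro b
  induction b with
  | zero => omega
  | succ b ih =>
    intro c hc hb
    rcases Nat.lt_or_ge c b with h | h
    · exact lt_trans (ih c h (by omega)) (choose_step m b hb)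
    · have : c = b := by omega
      subst this
      exact choose_step m c hb

/-- For the univariate hypergeometric `X ~ H_2(n; s, t-s)` one has
`P_n[X = l-1]·(s-l+1) < P_n[X = u]·(s-u)` (the right-hand side of the
pivotal ratio inequality (5) is strictly less than 1), stated in
cross-multiplied integer form. -/
theorem hypergeometric_endpoint_ineq (t s l u n : ℕ)
    (hlu : l + u = s) (hl : 1 ≤ l) (hlu2 : l ≤ u) (hus : u < s)
    (hst : s ≤ t) (hun : u ≤ n) (hnu : n - u ≤ t - s) (hn : t ≤ 2 * n) :
    s.choose (l - 1) * (t - s).choose (n - l + 1) * (s - l + 1) <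
      s.choose u * (t - s).choose (n - u) * (s - u) := by
  set m := t - s with hm
  set a := n - l + 1 with ha
  set b := n - u with hb
  -- key binomial inequality: C(m,a) < C(m,b)
  have hXY : m.choose a < m.choose b := by
    have hbm : b ≤ m := hnu
    have hbpos : 0 < m.choose b := Nat.choose_pos hbm
    rcases Nat.lt_or_ge m a with hma | ham
    · rw [Nat.choose_eq_zero_of_lt hma]; exact hbpos
    · have hab : m < a + b := by omega
      have hba : b < a := by omega
      rw [← Nat.choose_symm ham]
      rcases Nat.lt_or_ge m (2 * b) with h2b | h2b
      · rw [← Nat.choose_symm hbm]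
        exact choose_mono_strict m (m - b) (m - a) (by omega) (by omega)
      · exact choose_mono_strict m b (m - a) (by omega) h2b
  -- key scalar identity
  have key : s.choose (l - 1) * (s - l + 1) = s.choose u * (s - u) := by
    have h1 := Nat.choose_succ_right_eq s (l - 1)
    have h2 : l - 1 + 1 = l := by omega
    rw [h2] at h1
    have h3 : s - (l - 1) = s - l + 1 := by omega
    rw [h3] at h1
    have h4 : s.choose l = s.choose u := Nat.choose_symm_of_eq_add hlu.symm
    have h5 : s - u = l := by omega
    rw [h5, ← h4, ← h1]
  have hpos : 0 < s.choose u * (s - u) := by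
    have : 0 < s.choose u := Nat.choose_pos (by omega)
    have : 0 < s - u := by omega
    positivity
  calc s.choose (l - 1) * m.choose a * (s - l + 1)
      = s.choose (l - 1) * (s - l + 1) * m.choose a := by ring
    _ = s.choose u * (s - u) * m.choose a := by rw [key]
    _ < s.choose u * (s - u) * m.choose b := by
        exact (Nat.mul_lt_mul_left hpos).mpr hXY
    _ = s.choose u * m.choose b * (s - u) := by ring
end

section
/- Let m ≥ 2, let s_1,…,s_m be nonnegative integers with total t = s_1+⋯+s_m, and let l_j, u_j be integers with 0 ≤ l_j ≤ u_j ≤ s_j and l_j + u_j = s_j for each j (symmetric core constraints). Fix an index j and for a nonnegative integer r let N_{−j}(r) = ∑ ∏_{k≠j} C(s_k, x_k), the sum over all x ∈ ℕ^{m−1} with ∑_{k≠j} x_k = r and l_k ≤ x_k ≤ u_k for all k ≠ j. Suppose 2n ≥ t, l_j ≥ 1, u_j ≤ n, and n − u_j ≤ t − s_j. Then N_{−j}(n − u_j)·C(t − s_j, n − l_j + 1) ≥ N_{−j}(n − l_j + 1)·C(t − s_j, n − u_j); equivalently, for X ~ H_m(n; s), P_n[X_{−j} ∈ B_{−j} |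 X_j = u_j] ≥ P_n[X_{−j} ∈ B_{−j} | X_j = l_j − 1]. -/
/-!
`N_{-j}(r)` is the coefficient of `X^r` in `Q = ∏_{k ≠ j} ∑_{x = l_k}^{u_k} C(s_k, x) X^x`, a
polynomial of size `T = t - s_j`. Call `F` binomial-ratio unimodal of size `S` if its
coefficients are nonnegative and symmetric (`F_r = F_{S-r}`) and `F_r / C(S, r)` is nondecreasing
for `r ≤ S / 2`; the ratio then decreases away from `S / 2`, and `r = n - l_j + 1` is at least as
far from `T / 2` as `r = n - u_j`.

Each factor of `Q` qualifies, its ratio being the indicator of an interval symmetric about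
`s_k / 2`. The property is stable under products: for `H = F G` of size `S + T`, both sides of
the step inequality `(S + T - R) H_R ≤ (R + 1) H_{R + 1}` are convolutions that split into an
`F`-part and a `G`-part, and each part is compared by pairing `y` with its mirror `S - 1 - y`.
-/

open Polynomial Finset Function

noncomputable def intCoeff (F : ℤ[X]) (n : ℤ) : ℤ :=
  if 0 ≤ n then F.coeff n.toNat else 0

section IntCoeff

variable (F G : ℤ[X])

@[simp]
lemma intCoeff_natCast (n : ℕ) : intCoeff F n = F.coeff n := by
  simp [intCoeff]

lemma intCoeff_of_neg {n : ℤ} (hn : n < 0) : intCoeff F n = 0 := by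
  simp [intCoeff, not_le.mpr hn]

lemma intCoeff_one (n : ℤ) : intCoeff 1 n = if n = 0 then 1 else 0 := by
  unfold intCoeff
  split_ifs <;> simp [coeff_one] <;> omega

@[fun_prop]
lemma hasFiniteSupport_intCoeff : HasFiniteSupport (intCoeff F) := by
  refine (F.support.finite_toSet.image ((↑) : ℕ → ℤ)).subset fun n hn => ?_
  have h0 : 0 ≤ n := not_lt.mp fun h => hn (intCoeff_of_neg F h)
  refine ⟨n.toNat, ?_, Int.toNat_of_nonneg h0⟩
  simpa [intCoeff, h0] using hn

@[fun_prop]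
lemma hasFiniteSupport_intCoeff_add (c : ℤ) : HasFiniteSupport fun n => intCoeff F (n + c) :=
  (hasFiniteSupport_intCoeff F).comp_of_injective (add_left_injective c)

lemma intCoeff_mul (n : ℤ) :
    intCoeff (F * G) n = ∑ᶠ y, intCoeff F y * intCoeff G (n - y) := by
  rcases lt_or_ge n 0 with hn | hn
  · rw [intCoeff_of_neg _ hn, finsum_eq_zero_of_forall_eq_zero]
    intro y
    rcases lt_or_ge y 0 with hy | hy
    · rw [intCoeff_of_neg F hy, zero_mul]
    · rw [intCoeff_of_neg G (by omega), mul_zero]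
  lift n to ℕ using hn
  have hsupp : (support fun y => intCoeff F y * intCoeff G (n - y)) ⊆
      ((range (n + 1)).map Nat.castEmbedding : Finset ℤ) := by
    intro y hy
    have h0 : 0 ≤ y := not_lt.mp fun h => hy (by simp [intCoeff_of_neg F h])
    have h1 : y ≤ n := not_lt.mp fun h =>
      hy (by simp [intCoeff_of_neg G (show (n : ℤ) - y < 0 by omega)])
    simp only [coe_map, coe_range, Set.mem_image, Set.mem_Iio, Nat.castEmbedding_apply]
    exact ⟨y.toNat, by omega, by omega⟩
  rw [finsum_eq_sum_of_support_subset _ hsupp, sum_map, intCoeff_natCast, coeff_mul,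
    Nat.sum_antidiagonal_eq_sum_range_succ_mk]
  refine sum_congr rfl fun k hk => ?_
  rw [mem_range] at hk
  rw [Nat.castEmbedding_apply, ← Nat.cast_sub (by omega), intCoeff_natCast, intCoeff_natCast]

lemma mul_intCoeff_mul_eq (n c : ℤ) (v w : ℤ → ℤ) (hvw : ∀ y, v y + w (n - y) = c) :
    c * intCoeff (F * G) n = ∑ᶠ y, v y * intCoeff F y * intCoeff G (n - y) +
      ∑ᶠ y, w y * intCoeff G y * intCoeff F (n - y) := by
  have reflect : ∑ᶠ y, w y * intCoeff G y * intCoeff F (n - y) =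
      ∑ᶠ y, w (n - y) * intCoeff F y * intCoeff G (n - y) := by
    rw [← finsum_comp_equiv (Equiv.subLeft n)]
    exact finsum_congr fun y => by simp only [Equiv.subLeft_apply, sub_sub_cancel]; ring
  rw [reflect, ← finsum_add_distrib (by fun_prop) (by fun_prop), intCoeff_mul, mul_finsum]
  exact finsum_congr fun y => by rw [← hvw y]; ring

end IntCoeff

lemma finsum_mul_nonneg_of_antisymm {δ γ : ℤ → ℤ} {K : ℤ} (hδ : HasFiniteSupport δ)
    (hanti : ∀ y, δ (K - y) = -δ y) (hpos : ∀ y, 2 * y ≤ K → 0 ≤ δ y)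
    (hγ : ∀ y, 2 * y ≤ K → γ (K - y) ≤ γ y) :
    0 ≤ ∑ᶠ y, δ y * γ y := by
  have reflect : ∑ᶠ y, δ y * γ y = -∑ᶠ y, δ y * γ (K - y) := by
    rw [← finsum_comp_equiv (Equiv.subLeft K), ← finsum_neg_distrib]
    exact finsum_congr fun y => by simp [hanti]
  have termwise : ∀ y, 0 ≤ δ y * (γ y - γ (K - y)) := by
    intro y
    rcases le_total (2 * y) K with h | h
    · exact mul_nonneg (hpos y h) (sub_nonneg.mpr (hγ y h))
    · have h' : 2 * (K - y) ≤ K := by omega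
      have hδy := hanti (K - y)
      have hγy := hγ (K - y) h'
      rw [sub_sub_cancel] at hδy hγy
      exact mul_nonneg_of_nonpos_of_nonpos (by linarith [hpos _ h']) (by linarith)
  have hsum : 2 * ∑ᶠ y, δ y * γ y = ∑ᶠ y, δ y * (γ y - γ (K - y)) := by
    rw [two_mul]
    nth_rewrite 2 [reflect]
    rw [← sub_eq_add_neg, ← finsum_sub_distrib (by fun_prop) (by fun_prop)]
    simp only [mul_sub]
  linarith [finsum_nonneg termwise]

lemma le_of_symm_of_le_add_one {α : Type*} [Preorder α] {f : ℤ → α} {S : ℤ}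
    (hsymm : ∀ n, f (S - n) = f n) (hstep : ∀ n, 2 * n + 1 ≤ S → f n ≤ f (n + 1))
    {a b : ℤ} (hba : b ≤ a) (hab : a + b ≤ S) : f b ≤ f a := by
  have lower : ∀ a, b ≤ a → 2 * a ≤ S → f b ≤ f a := by
    intro a hba
    induction a, hba using Int.leInduction with
    | base => exact fun _ => le_rfl
    | succ a _ ih => exact fun ha => (ih (by omega)).trans (hstep a (by omega))
  rcases le_or_gt (2 * a) S with h | h
  · exact lower a hba h
  · rw [← hsymm a]
    exact lower _ (by omega) (by omega)

/-- The step condition says that `intCoeff F n / C(S, n)` is nondecreasing on `2 n + 1 ≤ S`,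
since `C(S, n + 1) / C(S, n) = (S - n) / (n + 1)`. -/
structure IsBinomRatioUnimodal (F : ℤ[X]) (S : ℕ) : Prop where
  nonneg : ∀ n, 0 ≤ intCoeff F n
  symm : ∀ n, intCoeff F (S - n) = intCoeff F n
  step : ∀ n : ℤ, 2 * n + 1 ≤ S → (S - n) * intCoeff F n ≤ (n + 1) * intCoeff F (n + 1)

noncomputable def binomRatio (F : ℤ[X]) (S : ℕ) (n : ℤ) : ℚ :=
  intCoeff F n / S.choose n.toNat

namespace IsBinomRatioUnimodal

variable {F G : ℤ[X]} {S T : ℕ}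

lemma intCoeff_eq_zero_of_lt (hF : IsBinomRatioUnimodal F S) {n : ℤ} (hn : S < n) :
    intCoeff F n = 0 := by
  rw [← hF.symm n, intCoeff_of_neg F (by omega)]

lemma coeff_eq_zero_of_lt (hF : IsBinomRatioUnimodal F S) {n : ℕ} (hn : S < n) :
    F.coeff n = 0 := by
  rw [← intCoeff_natCast, hF.intCoeff_eq_zero_of_lt (by exact_mod_cast hn)]

lemma intCoeff_le_add_one (hF : IsBinomRatioUnimodal F S) {n : ℤ} (hn : 2 * n + 1 ≤ S) :
    intCoeff F n ≤ intCoeff F (n + 1) := by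
  rcases lt_or_ge n 0 with hneg | hnonneg
  · rw [intCoeff_of_neg F hneg]
    exact hF.nonneg _
  · refine le_of_mul_le_mul_left ?_ (by omega : (0 : ℤ) < n + 1)
    calc (n + 1) * intCoeff F n ≤ (S - n) * intCoeff F n :=
          mul_le_mul_of_nonneg_right (by omega) (hF.nonneg n)
      _ ≤ (n + 1) * intCoeff F (n + 1) := hF.step n hn

lemma intCoeff_le (hF : IsBinomRatioUnimodal F S) {a b : ℤ} (hba : b ≤ a) (hab : a + b ≤ S) :
    intCoeff F b ≤ intCoeff F a :=
  le_of_symm_of_le_add_one hF.symm (fun _ => hF.intCoeff_le_add_one) hba hab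

lemma binomRatio_symm (hF : IsBinomRatioUnimodal F S) (n : ℤ) :
    binomRatio F S (S - n) = binomRatio F S n := by
  unfold binomRatio
  rw [hF.symm]
  by_cases h : intCoeff F n = 0
  · simp [h]
  have h0 : 0 ≤ n := not_lt.mp fun hn => h (intCoeff_of_neg F hn)
  have h1 : n ≤ S := not_lt.mp fun hn => h (hF.intCoeff_eq_zero_of_lt hn)
  rw [show ((S : ℤ) - n).toNat = S - n.toNat by omega, Nat.choose_symm (by omega)]

lemma binomRatio_le_add_one (hF : IsBinomRatioUnimodal F S) {n : ℤ} (hn : 2 * n + 1 ≤ S) :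
    binomRatio F S n ≤ binomRatio F S (n + 1) := by
  unfold binomRatio
  rcases lt_or_ge n 0 with hneg | hnonneg
  · rw [intCoeff_of_neg F hneg, Int.cast_zero, zero_div]
    exact div_nonneg (by exact_mod_cast hF.nonneg _) (Nat.cast_nonneg _)
  lift n to ℕ using hnonneg
  have hnS : n + 1 ≤ S := by omega
  rw [show (n : ℤ) + 1 = ((n + 1 : ℕ) : ℤ) by push_cast; ring]
  simp only [intCoeff_natCast, Int.toNat_natCast]
  rw [div_le_div_iff₀ (by exact_mod_cast Nat.choose_pos (by omega))
    (by exact_mod_cast Nat.choose_pos hnS)]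
  have hchoose : (S.choose (n + 1) : ℚ) * (n + 1) = S.choose n * (S - n) := by
    rw [← Nat.cast_sub (by omega)]
    exact_mod_cast Nat.choose_succ_right_eq S n
  have hstep : ((S : ℚ) - n) * F.coeff n ≤ (n + 1) * F.coeff (n + 1) := by
    have := hF.step n (by exact_mod_cast hn)
    simp only [intCoeff_natCast] at this
    exact_mod_cast this
  refine le_of_mul_le_mul_left ?_ (by positivity : (0 : ℚ) < n + 1)
  calc ((n : ℚ) + 1) * (F.coeff n * S.choose (n + 1))
      = (S - n) * F.coeff n * S.choose n := by linear_combination (F.coeff n : ℚ) * hchoose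
    _ ≤ (n + 1) * F.coeff (n + 1) * S.choose n :=
      mul_le_mul_of_nonneg_right hstep (Nat.cast_nonneg _)
    _ = (n + 1) * (F.coeff (n + 1) * S.choose n) := by ring

lemma coeff_mul_choose_le (hF : IsBinomRatioUnimodal F S) {a b : ℕ} (hab : a ≤ b)
    (hS : S ≤ a + b) : F.coeff b * S.choose a ≤ F.coeff a * S.choose b := by
  rcases le_or_gt b S with hb | hb
  · have key := le_of_symm_of_le_add_one hF.binomRatio_symm (fun _ => hF.binomRatio_le_add_one)
      (a := a) (b := S - b) (by omega) (by omega)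
    rw [hF.binomRatio_symm] at key
    simp only [binomRatio, intCoeff_natCast, Int.toNat_natCast] at key
    rw [div_le_div_iff₀ (by exact_mod_cast Nat.choose_pos hb)
      (by exact_mod_cast Nat.choose_pos (by omega))] at key
    exact_mod_cast key
  · rw [hF.coeff_eq_zero_of_lt hb, zero_mul]
    exact mul_nonneg (by simpa using hF.nonneg a) (Nat.cast_nonneg _)

/-- Pairing `y` with `S - 1 - y`: the antisymmetric weight `δ` below is nonnegative on the lower
half by the step condition for `F`, where `G (R - y)` dominates its mirror image. -/
lemma finsum_step_le (hF : IsBinomRatioUnimodal F S) (hG : IsBinomRatioUnimodal G T) {R : ℤ}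
    (hR : 2 * R + 1 ≤ S + T) :
    ∑ᶠ y, (S - y) * intCoeff F y * intCoeff G (R - y) ≤
      ∑ᶠ y, y * intCoeff F y * intCoeff G (R + 1 - y) := by
  have shift : ∑ᶠ y, y * intCoeff F y * intCoeff G (R + 1 - y) =
      ∑ᶠ y, (y + 1) * intCoeff F (y + 1) * intCoeff G (R - y) := by
    rw [← finsum_comp_equiv (Equiv.addRight 1)]
    exact finsum_congr fun y => by rw [Equiv.coe_addRight, add_sub_add_right_eq_sub]
  rw [shift, ← sub_nonneg, ← finsum_sub_distrib (by fun_prop) (by fun_prop)]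
  have key := finsum_mul_nonneg_of_antisymm (K := S - 1)
    (δ := fun y => (y + 1) * intCoeff F (y + 1) - (S - y) * intCoeff F y)
    (γ := fun y => intCoeff G (R - y)) (by fun_prop)
    (fun y => by
      rw [show (S : ℤ) - 1 - y + 1 = S - y by ring, show (S : ℤ) - 1 - y = S - (y + 1) by ring,
        hF.symm, hF.symm]
      ring)
    (fun y hy => sub_nonneg.mpr (hF.step y (by omega)))
    (fun y hy => hG.intCoeff_le (by omega) (by omega))
  exact key.trans_eq (finsum_congr fun y => by ring)

theorem mul (hF : IsBinomRatioUnimodal F S) (hG : IsBinomRatioUnimodal G T) :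
    IsBinomRatioUnimodal (F * G) (S + T) where
  nonneg n := by
    rw [intCoeff_mul]
    exact finsum_nonneg fun y => mul_nonneg (hF.nonneg y) (hG.nonneg _)
  symm n := by
    rw [intCoeff_mul, intCoeff_mul, ← finsum_comp_equiv (Equiv.subLeft (S : ℤ))]
    refine finsum_congr fun y => ?_
    rw [Equiv.subLeft_apply, hF.symm, show ((S + T : ℕ) : ℤ) - n - (S - y) = T - (n - y) by
      push_cast; ring, hG.symm]
  step R hR := by
    push_cast at hR ⊢
    calc (S + T - R) * intCoeff (F * G) R
        = ∑ᶠ y, (S - y) * intCoeff F y * intCoeff G (R - y) +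
            ∑ᶠ y, (T - y) * intCoeff G y * intCoeff F (R - y) :=
          mul_intCoeff_mul_eq F G R _ (fun y => S - y) (fun y => T - y) fun y => by ring
      _ ≤ ∑ᶠ y, y * intCoeff F y * intCoeff G (R + 1 - y) +
            ∑ᶠ y, y * intCoeff G y * intCoeff F (R + 1 - y) :=
          add_le_add (hF.finsum_step_le hG hR) (hG.finsum_step_le hF (by omega))
      _ = (R + 1) * intCoeff (F * G) (R + 1) :=
          (mul_intCoeff_mul_eq F G (R + 1) _ id id fun y => by simp).symm

theorem one : IsBinomRatioUnimodal 1 0 where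
  nonneg n := by rw [intCoeff_one]; split_ifs <;> norm_num
  symm n := by simp [intCoeff_one]
  step n hn := by
    simp only [intCoeff_one]
    split_ifs <;> omega

theorem prod {ι : Type*} (s : Finset ι) {P : ι → ℤ[X]} {S : ι → ℕ}
    (h : ∀ i ∈ s, IsBinomRatioUnimodal (P i) (S i)) :
    IsBinomRatioUnimodal (∏ i ∈ s, P i) (∑ i ∈ s, S i) := by
  induction s using Finset.cons_induction with
  | empty => simpa using one
  | cons a s ha ih =>
    rw [prod_cons, sum_cons]
    exact (h a (mem_cons_self a s)).mul (ih fun i hi => h i (mem_cons_of_mem hi))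

end IsBinomRatioUnimodal

noncomputable def truncBinomPoly (s l u : ℕ) : ℤ[X] :=
  ∑ x ∈ Icc l u, C (s.choose x : ℤ) * X ^ x

lemma coeff_truncBinomPoly (s l u k : ℕ) :
    (truncBinomPoly s l u).coeff k = if l ≤ k ∧ k ≤ u then (s.choose k : ℤ) else 0 := by
  simp [truncBinomPoly, finsetSum_coeff]

lemma intCoeff_truncBinomPoly (s l u : ℕ) (n : ℤ) :
    intCoeff (truncBinomPoly s l u) n =
      if l ≤ n ∧ n ≤ u then (s.choose n.toNat : ℤ) else 0 := by
  unfold intCoeff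
  split_ifs with h0 h1 h1
  · rw [coeff_truncBinomPoly, if_pos (by omega)]
  · rw [coeff_truncBinomPoly, if_neg (by omega)]
  · omega
  · rfl

theorem isBinomRatioUnimodal_truncBinomPoly {s l u : ℕ} (hsym : l + u = s) :
    IsBinomRatioUnimodal (truncBinomPoly s l u) s where
  nonneg n := by
    rw [intCoeff_truncBinomPoly]
    split_ifs <;> positivity
  symm n := by
    subst hsym
    simp only [intCoeff_truncBinomPoly]
    split_ifs with h1 h2 h2
    · rw [show ((l + u : ℕ) - n : ℤ).toNat = l + u - n.toNat by omega,
        Nat.choose_symm (by omega)]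
    all_goals omega
  step n hn := by
    subst hsym
    simp only [intCoeff_truncBinomPoly]
    split_ifs with h1 h2 h2
    · lift n to ℕ using (by omega)
      rw [Int.toNat_natCast, show ((n : ℤ) + 1).toNat = n + 1 by omega,
        ← Nat.cast_sub (by omega)]
      norm_cast
      rw [mul_comm, ← Nat.choose_succ_right_eq, mul_comm]
    · omega
    · rw [mul_zero]
      exact mul_nonneg (by omega) (Nat.cast_nonneg _)
    · rw [mul_zero, mul_zero]

lemma coeff_prod_truncBinomPoly {ι : Type*} [Fintype ι] [DecidableEq ι] (s l u : ι → ℕ)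
    (r : ℕ) :
    (∏ k, truncBinomPoly (s k) (l k) (u k)).coeff r =
      ∑ x ∈ (Fintype.piFinset fun k => Icc (l k) (u k)) with ∑ k, x k = r,
        ∏ k, ((s k).choose (x k) : ℤ) := by
  simp only [truncBinomPoly, prod_univ_sum, prod_mul_distrib, ← map_prod, prod_pow_eq_pow_sum,
    finsetSum_coeff, coeff_C_mul_X_pow, sum_filter, eq_comm]

theorem conditional_core_ordering_general (m : ℕ) (s l u : Fin m → ℕ)
    (hlu : ∀ j, l j ≤ u j)
    (hsym : ∀ j, l j + u j = s j)
    (t : ℕ) (ht : t = ∑ j, s j)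
    (j : Fin m)
    (Nmj : ℕ → ℕ)
    (hNmj : ∀ r, Nmj r = ∑ x ∈ (Fintype.piFinset fun k : {k : Fin m // k ≠ j} =>
        Finset.Icc (l k.1) (u k.1)).filter (fun x => ∑ k, x k = r),
        ∏ k, (s k.1).choose (x k))
    (n : ℕ) (h1 : t ≤ 2 * n) (h3 : u j ≤ n) :
    Nmj (n - l j + 1) * (t - s j).choose (n - u j) ≤
      Nmj (n - u j) * (t - s j).choose (n - l j + 1) := by
  set Q := ∏ k : {k : Fin m // k ≠ j}, truncBinomPoly (s k) (l k) (u k)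
  have hsum : ∑ k : {k : Fin m // k ≠ j}, s k = t - s j := by
    rw [ht, ← add_sum_erase univ s (mem_univ j),
      sum_subtype (univ.erase j) (p := (· ≠ j)) (fun k => by simp) s]
    omega
  have hQ : IsBinomRatioUnimodal Q (t - s j) :=
    hsum ▸ IsBinomRatioUnimodal.prod _ fun k _ => isBinomRatioUnimodal_truncBinomPoly (hsym k)
  have hN : ∀ r, (Nmj r : ℤ) = Q.coeff r := fun r => by
    rw [hNmj, coeff_prod_truncBinomPoly]
    push_cast
    rfl
  have key := hQ.coeff_mul_choose_le (a := n - u j) (b := n - l j + 1) (by have := hlu j; omega)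
    (by have := hsym j; omega)
  rw [← hN, ← hN] at key
  exact_mod_cast key

/-- Left-hand side of the pivotal ratio inequality (5) is at least 1:
for `X ~ H_m(n; s)` with a symmetric core `B`,
`P_n[X_{-j} ∈ B_{-j} | X_j = u_j] ≥ P_n[X_{-j} ∈ B_{-j} | X_j = l_j - 1]`,
stated in cross-multiplied form via the core counts `N_{-j}`. -/
theorem conditional_core_ordering (m : ℕ) (hm : 2 ≤ m) (s l u : Fin m → ℕ)
    (hlu : ∀ j, l j ≤ u j) (hus : ∀ j, u j ≤ s j)
    (hsym : ∀ j, l j + u j = s j)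
    (t : ℕ) (ht : t = ∑ j, s j)
    (j : Fin m)
    (Nmj : ℕ → ℕ)
    (hNmj : ∀ r, Nmj r = ∑ x ∈ (Fintype.piFinset fun k : {k : Fin m // k ≠ j} =>
        Finset.Icc (l k.1) (u k.1)).filter (fun x => ∑ k, x k = r),
        ∏ k, (s k.1).choose (x k))
    (n : ℕ) (h1 : t ≤ 2 * n) (h2 : 1 ≤ l j) (h3 : u j ≤ n) (h4 : n - u j ≤ t - s j) :
    Nmj (n - l j + 1) * (t - s j).choose (n - u j) ≤
      Nmj (n - u j) * (t - s j).choose (n - l j + 1) :=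
  conditional_core_ordering_general m s l u hlu hsym t ht j Nmj hNmj n h1 h3
end

section
/- Let m ≥ 2, let s_1,…,s_m be nonnegative integers with total t = s_1+⋯+s_m, and let l_j, u_j be integers with 0 ≤ l_j ≤ u_j ≤ s_j and l_j + u_j = s_j for each j (symmetric core constraints). Fix an index j and for a nonnegative integer r let N_{−j}(r) = ∑ ∏_{k≠j} C(s_k, x_k), the sum over all x ∈ ℕ^{m−1} with ∑_{k≠j} x_k = r and l_k ≤ x_k ≤ u_k for all k ≠ j. Suppose 2n ≥ t, n < t, l_j ≥ 1, u_j ≤ n, and n − u_j ≤ t − s_j. Then C(s_j, u_j)·N_{−j}(n − u_j)·(s_j − u_j) ≥ C(s_j, l_j − 1)·N_{−j}(n − l_j + 1)·(s_j − l_j + 1); equivalently, in the urn experiment with one additional draw of color C after n draws, P_n[X_j = u_j, X_{−j} ∈ B_{−j}, C = j] ≥ P_n[X_j = l_j − 1, X_{−j} ∈ B_{−j}, C = j]. -/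
/-!
When `l + u = s` and `l ≥ 1`, `C(s, l - 1) (s - l + 1) = C(s, u + 1) (u + 1) = C(s, u) (s - u)`,
so the claim is `N(n - l_j + 1) ≤ N(n - u_j)`. Now `N` is the coefficient sequence of
`∏_{k ≠ j} ∑_{x = l_k}^{u_k} C(s_k, x) X^x`; each factor is symmetric and unimodal about `s_k / 2`
because the window `[l_k, u_k]` is centred there, and such sequences are closed under convolution.
Hence `N` is symmetric unimodal about `(t - s_j) / 2`, and `2n ≥ t` puts `n - u_j` at least as
close to that centre as `n - l_j + 1`.
-/

open Finset AddMonoidAlgebra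

section SymmUnimodal

variable {R : Type*} [LinearOrder R]

/-- `a` is symmetric about `T / 2` and weakly decreasing away from it. -/
def IsSymmUnimodal (T : ℤ) (a : ℤ → R) : Prop :=
  ∀ ⦃p q : ℤ⦄, |2 * p - T| ≤ |2 * q - T| → a q ≤ a p

theorem IsSymmUnimodal.apply_eq {T : ℤ} {a : ℤ → R} (ha : IsSymmUnimodal T a) {p q : ℤ}
    (h : |2 * p - T| = |2 * q - T|) : a p = a q :=
  le_antisymm (ha h.ge) (ha h.le)

variable [CommRing R] [IsStrictOrderedRing R]

theorem Finset.sum_mul_nonneg_of_involutive {ι : Type*} {S : Finset ι} {σ : ι → ι}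
    (hσ : Function.Involutive σ) (hS : ∀ i ∈ S, σ i ∈ S) {a d : ι → R}
    (hd : ∀ i, d (σ i) = -d i) (had : ∀ i ∈ S, 0 ≤ (a i - a (σ i)) * d i) :
    0 ≤ ∑ i ∈ S, a i * d i := by
  have hreflect : ∑ i ∈ S, a i * d i = -∑ i ∈ S, a (σ i) * d i := by
    rw [← sum_neg_distrib]
    refine sum_nbij' σ σ hS hS (fun i _ => hσ i) (fun i _ => hσ i) fun i _ => ?_
    rw [hσ, hd, mul_neg, neg_neg]
  have := sum_nonneg had
  simp only [sub_mul, sum_sub_distrib] at this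
  linarith

theorem IsSymmUnimodal.mul {F G : ℤ} {x y : AddMonoidAlgebra R ℤ}
    (hx : IsSymmUnimodal F x.coeff) (hy : IsSymmUnimodal G y.coeff) :
    IsSymmUnimodal (F + G) (x * y).coeff := by
  -- `(x * y)(p) - (x * y)(q) = ∑ x_i d_i` with `d` odd under `i ↦ K - i`, and on each side of
  -- `K / 2` the factors `x_i - x_{K - i}` and `d_i` have the same sign.
  classical
  intro p q hpq
  set K := p + q - G
  set S := x.coeff.support ∪ x.coeff.support.image (K - ·)
  have hcoeff (r : ℤ) : (x * y).coeff r = ∑ i ∈ S, x.coeff i * y.coeff (-i + r) :=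
    (coeff_mul_apply_left x y r).trans
      (Finsupp.sum_of_support_subset _ subset_union_left _ fun _ _ => zero_mul _)
  rw [← sub_nonneg, hcoeff, hcoeff, ← sum_sub_distrib]
  simp_rw [← mul_sub]
  refine sum_mul_nonneg_of_involutive (σ := (K - ·)) (sub_sub_cancel K) ?_ ?_ fun i _ => ?_
  · intro i hi
    simp only [S, mem_union, mem_image] at hi ⊢
    rcases hi with hi | ⟨i', hi', rfl⟩
    · exact Or.inr ⟨i, hi, rfl⟩
    · exact Or.inl (by rwa [sub_sub_cancel])
  · intro i
    have hreflect (r : ℤ) : y.coeff (-(K - i) + r) = y.coeff (-i + (p + q - r)) :=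
      hy.apply_eq (by rw [← abs_neg]; congr 1; ring)
    simp only [hreflect]
    ring_nf
  · obtain ⟨hxi, hyi⟩ | ⟨hxi, hyi⟩ :
        (|2 * i - F| ≤ |2 * (K - i) - F| ∧ |2 * (-i + p) - G| ≤ |2 * (-i + q) - G|) ∨
        (|2 * (K - i) - F| ≤ |2 * i - F| ∧ |2 * (-i + q) - G| ≤ |2 * (-i + p) - G|) := by
      simp only [K, abs_eq_max_neg] at hpq ⊢
      omega
    · exact mul_nonneg (sub_nonneg.2 (hx hxi)) (sub_nonneg.2 (hy hyi))
    · exact mul_nonneg_of_nonpos_of_nonpos (sub_nonpos.2 (hx hxi)) (sub_nonpos.2 (hy hyi))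

theorem isSymmUnimodal_one : IsSymmUnimodal 0 (1 : AddMonoidAlgebra R ℤ).coeff := by
  intro p q hpq
  simp only [abs_eq_max_neg] at hpq
  rw [one_def, coeff_single, Finsupp.single_apply, Finsupp.single_apply]
  split_ifs <;> first | rfl | exact zero_le_one | omega

theorem IsSymmUnimodal.prod {ι : Type*} {S : Finset ι} {T : ι → ℤ} {f : ι → AddMonoidAlgebra R ℤ}
    (h : ∀ k ∈ S, IsSymmUnimodal (T k) (f k).coeff) :
    IsSymmUnimodal (∑ k ∈ S, T k) (∏ k ∈ S, f k).coeff := by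
  induction S using Finset.cons_induction with
  | empty => simpa using isSymmUnimodal_one
  | cons k S _ ih =>
    rw [sum_cons, prod_cons]
    exact (h k (mem_cons_self k S)).mul (ih fun i hi => h i (mem_cons_of_mem hi))

end SymmUnimodal

theorem Nat.choose_le_choose_of_le_half {n a b : ℕ} (hab : a ≤ b) (hb : b ≤ n / 2) :
    n.choose a ≤ n.choose b := by
  induction b, hab using Nat.le_induction with
  | base => rfl
  | succ b hab ih => exact (ih (by omega)).trans (choose_le_succ_of_lt_half_left (by omega))

theorem Nat.choose_le_choose_of_abs_le {n p q : ℕ} (hp : p ≤ n)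
    (h : |2 * (p : ℤ) - n| ≤ |2 * (q : ℤ) - n|) : n.choose q ≤ n.choose p := by
  rcases le_or_gt q n with hq | hq
  · have hmin {r : ℕ} (hr : r ≤ n) : n.choose (min r (n - r)) = n.choose r := by
      rcases le_total r (n - r) with h | h
      · rw [min_eq_left h]
      · rw [min_eq_right h, choose_symm hr]
    rw [← hmin hp, ← hmin hq]
    simp only [abs_eq_max_neg] at h
    exact choose_le_choose_of_le_half (by omega) (by omega)
  · rw [choose_eq_zero_of_lt hq]
    exact Nat.zero_le _

theorem Nat.choose_pred_mul_eq_choose_mul {s l u : ℕ} (hsum : l + u = s) (hl : 1 ≤ l) :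
    s.choose (l - 1) * (s - l + 1) = s.choose u * (s - u) := by
  rw [show l - 1 = s - (u + 1) by omega, choose_symm (by omega), show s - l + 1 = u + 1 by omega,
    choose_succ_right_eq]

section TruncatedBinomial

variable {R : Type*} [CommRing R]

noncomputable def truncatedBinomial (s l u : ℕ) : AddMonoidAlgebra R ℤ :=
  ∑ x ∈ Icc l u, single (x : ℤ) (s.choose x : R)

theorem coeff_truncatedBinomial (s l u : ℕ) (z : ℤ) :
    (truncatedBinomial s l u : AddMonoidAlgebra R ℤ).coeff z =
      if (l : ℤ) ≤ z ∧ z ≤ u then (s.choose z.toNat : R) else 0 := by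
  rw [truncatedBinomial, coeff_sum, Finset.sum_apply']
  simp only [coeff_single, Finsupp.single_apply]
  rcases lt_or_ge z 0 with hz | hz
  · rw [if_neg (by omega)]
    exact sum_eq_zero fun k _ => if_neg (by omega)
  · lift z to ℕ using hz
    simp only [Nat.cast_inj, Nat.cast_le, Int.toNat_natCast, sum_ite_eq', mem_Icc]

theorem coeff_prod_truncatedBinomial {ι : Type*} [Fintype ι] [DecidableEq ι] (s l u : ι → ℕ)
    (r : ℕ) :
    (∏ k, truncatedBinomial (s k) (l k) (u k) : AddMonoidAlgebra R ℤ).coeff r =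
      ∑ x ∈ (Fintype.piFinset fun k => Icc (l k) (u k)).filter (fun x => ∑ k, x k = r),
        ∏ k, ((s k).choose (x k) : R) := by
  simp only [truncatedBinomial, prod_univ_sum, prod_single, coeff_sum, coeff_single, sum_filter,
    Finset.sum_apply', Finsupp.single_apply, ← Nat.cast_sum, Nat.cast_inj]

variable [LinearOrder R] [IsStrictOrderedRing R]

theorem isSymmUnimodal_truncatedBinomial {s l u : ℕ} (hsum : l + u = s) :
    IsSymmUnimodal s (truncatedBinomial s l u : AddMonoidAlgebra R ℤ).coeff := by
  intro p q hpq
  simp only [abs_eq_max_neg] at hpq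
  simp only [coeff_truncatedBinomial]
  split_ifs with hq hp
  · exact_mod_cast Nat.choose_le_choose_of_abs_le (by omega)
      (by simp only [abs_eq_max_neg]; omega)
  · omega
  · positivity
  · rfl

end TruncatedBinomial

theorem bracket_term_nonneg_general (m : ℕ) (s l u : Fin m → ℕ)
    (hlu : ∀ j, l j ≤ u j)
    (hsym : ∀ j, l j + u j = s j)
    (t : ℕ) (ht : t = ∑ j, s j)
    (j : Fin m)
    (Nmj : ℕ → ℕ)
    (hNmj : ∀ r, Nmj r = ∑ x ∈ (Fintype.piFinset fun k : {k : Fin m // k ≠ j} =>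
        Finset.Icc (l k.1) (u k.1)).filter (fun x => ∑ k, x k = r),
        ∏ k, (s k.1).choose (x k))
    (n : ℕ) (h1 : t ≤ 2 * n)
    (h2 : 1 ≤ l j) (h3 : u j ≤ n) :
    (s j).choose (l j - 1) * Nmj (n - l j + 1) * (s j - l j + 1) ≤
      (s j).choose (u j) * Nmj (n - u j) * (s j - u j) := by
  classical
  have hunimodal : IsSymmUnimodal (∑ k : {k // k ≠ j}, (s k : ℤ))
      (∏ k : {k // k ≠ j}, truncatedBinomial (s k) (l k) (u k) : AddMonoidAlgebra ℤ ℤ).coeff :=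
    IsSymmUnimodal.prod fun k _ => isSymmUnimodal_truncatedBinomial (hsym k)
  have hrest : ∑ k : {k // k ≠ j}, (s k : ℤ) = t - s j := by
    rw [ht, Nat.cast_sum, Fintype.sum_eq_add_sum_subtype_ne _ j]
    ring
  have hN : Nmj (n - l j + 1) ≤ Nmj (n - u j) := by
    have := @hunimodal (n - u j : ℕ) (n - l j + 1 : ℕ) (by
      rw [hrest]; simp only [abs_eq_max_neg]; have := hsym j; have := hlu j; omega)
    rw [coeff_prod_truncatedBinomial, coeff_prod_truncatedBinomial] at this
    rw [hNmj, hNmj]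
    exact_mod_cast this
  calc (s j).choose (l j - 1) * Nmj (n - l j + 1) * (s j - l j + 1)
      = (s j).choose (u j) * (s j - u j) * Nmj (n - l j + 1) := by
        rw [mul_right_comm, Nat.choose_pred_mul_eq_choose_mul (hsym j) h2]
    _ ≤ (s j).choose (u j) * (s j - u j) * Nmj (n - u j) := Nat.mul_le_mul_left _ hN
    _ = (s j).choose (u j) * Nmj (n - u j) * (s j - u j) := mul_right_comm ..

/-- Non-negativity of each bracketed term in equation (4) of the paper:
in the urn experiment with one additional draw of color `C` after `n` draws,
`P_n[X_j = u_j, X_{-j} ∈ B_{-j}, C = j] ≥ P_n[X_j = l_j - 1, X_{-j} ∈ B_{-j}, C = j]`,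
stated in cross-multiplied integer form. -/
theorem bracket_term_nonneg (m : ℕ) (hm : 2 ≤ m) (s l u : Fin m → ℕ)
    (hlu : ∀ j, l j ≤ u j) (hus : ∀ j, u j ≤ s j)
    (hsym : ∀ j, l j + u j = s j)
    (t : ℕ) (ht : t = ∑ j, s j)
    (j : Fin m)
    (Nmj : ℕ → ℕ)
    (hNmj : ∀ r, Nmj r = ∑ x ∈ (Fintype.piFinset fun k : {k : Fin m // k ≠ j} =>
        Finset.Icc (l k.1) (u k.1)).filter (fun x => ∑ k, x k = r),
        ∏ k, (s k.1).choose (x k))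
    (n : ℕ) (h1 : t ≤ 2 * n) (h1' : n < t)
    (h2 : 1 ≤ l j) (h3 : u j ≤ n) (h4 : n - u j ≤ t - s j) :
    (s j).choose (l j - 1) * Nmj (n - l j + 1) * (s j - l j + 1) ≤
      (s j).choose (u j) * Nmj (n - u j) * (s j - u j) :=
  bracket_term_nonneg_general m s l u hlu hsym t ht j Nmj hNmj n h1 h2 h3
end

section
/- Let m ≥ 2, let s_1,…,s_m be nonnegative integers with total t = s_1+⋯+s_m, and let R_j = {l_j,…,u_j} be arbitrary discrete intervals with 0 ≤ l_j ≤ u_j ≤ s_j for each j. Let Y_1,…,Y_m be independent random variables with Y_j ~ Bin(s_j, 1/2), let Y = Y_1+⋯+Y_m (so Y ~ Bin(t, 1/2)), and let W_1,…,W_m be independent random variables with P[W_j = k] = P[Y_j = k]/P[Y_j ∈ R_j] for k ∈ R_j and 0 otherwise, and W = W_1+⋯+W_m. Then for every n with 0 ≤ n ≤ t, the multiple hypergeometric rectangle probability satisfies P[X ∈ R(l,u)] = M(n)/C(t,n) = P[W = n]·∏_{j=1}^m P[Y_j ∈ R_j] / P[Y = n], where M(n) = ∑ ∏_j C(s_j,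 x_j) over all x ∈ ℕ^m with ∑ x_j = n and x_j ∈ R_j for all j, and X ~ H_m(n; s), R(l,u) = (R_1 × ⋯ × R_m) ∩ Ω_{m,n}. -/
open Finset

/-!
On the box `∏ⱼ Rⱼ` every truncated binomial weight is `C(sⱼ, xⱼ) / (2^sⱼ qⱼ)` with
`qⱼ = P[Yⱼ ∈ Rⱼ]`, so `P[W = n] = M(n) / (2^t ∏ⱼ qⱼ)`; dividing by `P[Y = n] = C(t, n) / 2^t`
leaves `M(n) / C(t, n) · ∏ⱼ qⱼ`, and it remains to see that every `qⱼ` is nonzero.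
-/

theorem sum_Icc_choose_div_two_pow_pos {s l u : ℕ} (hlu : l ≤ u) (hus : u ≤ s) :
    0 < ∑ k ∈ Icc l u, ((s.choose k : ℚ) / 2 ^ s) := by
  refine sum_pos' (fun k _ => by positivity) ⟨l, mem_Icc.mpr ⟨le_rfl, hlu⟩, ?_⟩
  have : 0 < s.choose l := Nat.choose_pos (hlu.trans hus)
  positivity

theorem sum_prod_div_eq_sum_prod_div_prod {ι κ K : Type*} [Fintype ι] [Field K]
    (S : Finset (ι → κ)) (a : ι → κ → K) (c : ι → K) :
    ∑ x ∈ S, ∏ j, a j (x j) / c j = (∑ x ∈ S, ∏ j, a j (x j)) / ∏ j, c j := by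
  simp only [prod_div_distrib, sum_div]

theorem levin_representation_general (m : ℕ) (s l u : Fin m → ℕ)
    (hlu : ∀ j, l j ≤ u j) (hus : ∀ j, u j ≤ s j)
    (t : ℕ) (ht : t = ∑ j, s j)
    (n : ℕ) (hn : n ≤ t)
    (pY : Fin m → ℕ → ℚ)
    (hpY : ∀ j k, pY j k = ((s j).choose k : ℚ) / 2 ^ (s j))
    (q : Fin m → ℚ)
    (hq : ∀ j, q j = ∑ k ∈ Finset.Icc (l j) (u j), pY j k)
    (pW : Fin m → ℕ → ℚ)
    (hpW : ∀ j k, pW j k = if k ∈ Finset.Icc (l j) (u j) then pY j k / q j else 0)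
    (pWsum : ℕ → ℚ)
    (hpWsum : ∀ r, pWsum r = ∑ x ∈ (Fintype.piFinset fun j => Finset.Icc (l j) (u j)).filter
        (fun x => ∑ j, x j = r), ∏ j, pW j (x j))
    (pYsum : ℕ → ℚ)
    (hpYsum : ∀ r, pYsum r = (t.choose r : ℚ) / 2 ^ t)
    (M : ℕ → ℕ)
    (hM : ∀ r, M r = ∑ x ∈ (Fintype.piFinset fun j => Finset.Icc (l j) (u j)).filter
        (fun x => ∑ j, x j = r), ∏ j, (s j).choose (x j)) :
    (M n : ℚ) / t.choose n = pWsum n * (∏ j, q j) / pYsum n := by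
  have hq_ne : ∏ j, q j ≠ 0 := prod_ne_zero_iff.mpr fun j _ => by
    simpa only [hq, hpY] using (sum_Icc_choose_div_two_pow_pos (hlu j) (hus j)).ne'
  have hchoose_ne : (t.choose n : ℚ) ≠ 0 := by exact_mod_cast (Nat.choose_pos hn).ne'
  have hpW_box : ∀ x ∈ (Fintype.piFinset fun j => Icc (l j) (u j)).filter (fun x => ∑ j, x j = n),
      ∏ j, pW j (x j) = ∏ j, ((s j).choose (x j) : ℚ) / (2 ^ s j * q j) := fun x hx =>
    prod_congr rfl fun j _ => by
      rw [hpW, if_pos (Fintype.mem_piFinset.mp (mem_filter.mp hx).1 j), hpY, div_div]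
  have hpWsum_n : pWsum n = M n / (2 ^ t * ∏ j, q j) := by
    rw [hpWsum, sum_congr rfl hpW_box,
      sum_prod_div_eq_sum_prod_div_prod _ (fun j k => ((s j).choose k : ℚ)), hM, prod_mul_distrib,
      prod_pow_eq_pow_sum, ← ht]
    push_cast
    rfl
  rw [hpWsum_n, hpYsum]
  field_simp

/-- Lemma 1 (Levin): representation of multiple hypergeometric rectangle
probabilities via a convolution of truncated binomials. With
`Y_j ~ Bin(s_j, 1/2)` independent, `W_j` the restriction of `Y_j` to
`R_j = {l_j,…,u_j}`, `Y = ∑ Y_j ~ Bin(t, 1/2)` and `W = ∑ W_j`, one has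
`P[X ∈ R(l,u)] = M(n)/C(t,n) = P[W = n]·∏_j P[Y_j ∈ R_j] / P[Y = n]`. -/
theorem levin_representation (m : ℕ) (hm : 2 ≤ m) (s l u : Fin m → ℕ)
    (hlu : ∀ j, l j ≤ u j) (hus : ∀ j, u j ≤ s j)
    (t : ℕ) (ht : t = ∑ j, s j)
    (n : ℕ) (hn : n ≤ t)
    (pY : Fin m → ℕ → ℚ)
    (hpY : ∀ j k, pY j k = ((s j).choose k : ℚ) / 2 ^ (s j))
    (q : Fin m → ℚ)
    (hq : ∀ j, q j = ∑ k ∈ Finset.Icc (l j) (u j), pY j k)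
    (pW : Fin m → ℕ → ℚ)
    (hpW : ∀ j k, pW j k = if k ∈ Finset.Icc (l j) (u j) then pY j k / q j else 0)
    (pWsum : ℕ → ℚ)
    (hpWsum : ∀ r, pWsum r = ∑ x ∈ (Fintype.piFinset fun j => Finset.Icc (l j) (u j)).filter
        (fun x => ∑ j, x j = r), ∏ j, pW j (x j))
    (pYsum : ℕ → ℚ)
    (hpYsum : ∀ r, pYsum r = (t.choose r : ℚ) / 2 ^ t)
    (M : ℕ → ℕ)
    (hM : ∀ r, M r = ∑ x ∈ (Fintype.piFinset fun j => Finset.Icc (l j) (u j)).filter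
        (fun x => ∑ j, x j = r), ∏ j, (s j).choose (x j)) :
    (M n : ℚ) / t.choose n = pWsum n * (∏ j, q j) / pYsum n :=
  levin_representation_general m s l u hlu hus t ht n hn pY hpY q hq pW hpW pWsum hpWsum pYsum
    hpYsum M hM
end
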